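/- For β ∈ ℂ with Re β ≥ 0, the operator L↑_β defined by (L↑_β f)(z) = (1+z)^{−2β} f(z/(1+z)) is a bounded linear operator on H^∞(Π). Moreover, if β is real with β ≥ 0, then ‖(L↑_β)ⁿ‖ = 1 for every n ∈ ℕ, n ≥ 1. -/

import Mathlib

/-!
`L↑_β` is multiplication by the weight `(1 + z)^{-2β}` after composition with the self-map
`z ↦ z / (1 + z)` of `Π`; both preserve holomorphy, and the weight is bounded by
`exp (π |Im β|)` because `|arg (1 + z)| < π / 2`. The maps `z ↦ z / (1 + n z)` compose like
translations (conjugate by `z ↦ z⁻¹`), and `(1 + n z) (1 + z / (1 + n z)) = 1 + (n + 1) z`, so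
`(L↑_β)ⁿ f (z) = (1 + n z)^{-2β} f (z / (1 + n z))`. For real `β ≥ 0` the weight has modulus at
most `1`, so `‖L↑_β‖ ≤ 1`, while `(L↑_β)ⁿ 1 = (1 + n z)^{-2β} → 1` as `z → 0`.
-/

open Complex BoundedContinuousFunction
open scoped ENNReal

/-- The open right half-plane `Π = {z : ℂ | 0 < Re z}`. -/
def RHP : Set ℂ := {z : ℂ | 0 < z.re}

/-- Extension of a bounded continuous function on `Π` to `ℂ` (by zero off `Π`). -/
noncomputable def extFun (f : ↥RHP →ᵇ ℂ) : ℂ → ℂ :=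
  fun z => if h : 0 < z.re then f ⟨z, h⟩ else 0

/-- `H^∞(Π)`: the space of bounded holomorphic functions on `Π`, realised as the
submodule of the Banach space of bounded continuous functions on `Π` (with the
supremum norm) consisting of the holomorphic ones. -/
noncomputable def Hinf : Submodule ℂ (↥RHP →ᵇ ℂ) where
  carrier := {f | DifferentiableOn ℂ (extFun f) RHP}
  add_mem' := by
    intro f g hf hg
    refine (DifferentiableOn.add hf hg).congr (fun z hz => ?_)
    have hz' : 0 < z.re := hz
    simp only [extFun]
    simp only [extFun, Pi.add_apply, dif_pos hz']
    try rfl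
  zero_mem' := by
    refine (differentiableOn_const 0).congr (fun z hz => ?_)
    have hz' : 0 < z.re := hz
    simp only [extFun]
    rw [dif_pos hz']
    rfl
  smul_mem' := by
    intro c f hf
    refine (hf.const_smul c).congr (fun z hz => ?_)
    have hz' : 0 < z.re := hz
    simp only [extFun]
    simp only [extFun, Pi.smul_apply, dif_pos hz']
    try rfl

lemma mem_shift (z : ↥RHP) : (1 : ℂ) + z.1 ∈ RHP := by
  have hz := z.2
  simp only [RHP, Set.mem_setOf_eq, Complex.add_re, Complex.one_re] at *
  linarith

lemma mem_div (z : ↥RHP) : z.1 / (1 + z.1) ∈ RHP := by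
  have hz := z.2
  simp only [RHP, Set.mem_setOf_eq] at hz ⊢
  have hw : (1 + z.1) ≠ 0 := by
    intro h
    have h2 : (1 + z.1).re = 0 := by rw [h]; simp
    simp only [Complex.add_re, Complex.one_re] at h2
    linarith
  have hns : 0 < Complex.normSq (1 + z.1) := Complex.normSq_pos.mpr hw
  rw [Complex.div_re]
  have h1 : 0 < z.1.re * (1 + z.1).re := by
    simp only [Complex.add_re, Complex.one_re]
    nlinarith
  have h2 : 0 ≤ z.1.im * (1 + z.1).im := by
    simp only [Complex.add_im, Complex.one_im, zero_add]
    nlinarith [sq_nonneg z.1.im]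
  have := div_pos h1 hns
  have := div_nonneg h2 hns.le
  linarith

/-- Pointwise characterisation of the transfer operator
`(L↑_β f)(z) = (1+z)^(-2β) f(z/(1+z))` on `H^∞(Π)` (principal branch power). -/
def IsLup (β : ℂ) (T : ↥Hinf →L[ℂ] ↥Hinf) : Prop :=
  ∀ f : ↥Hinf, ∀ z : ↥RHP,
    (T f).1 z = (1 + z.1) ^ (-(2 * β)) * f.1 ⟨z.1 / (1 + z.1), mem_div z⟩

open Filter Topology

instance : Nonempty ↥RHP := ⟨⟨1, by simp [RHP]⟩⟩

lemma extFun_of_mem (f : ↥RHP →ᵇ ℂ) {z : ℂ} (hz : z ∈ RHP) : extFun f z = f ⟨z, hz⟩ :=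
  dif_pos hz

lemma ne_zero_of_mem_RHP {z : ℂ} (hz : z ∈ RHP) : z ≠ 0 :=
  slitPlane_ne_zero (Or.inl hz)

lemma one_add_mul_mem_RHP {c : ℝ} (hc : 0 ≤ c) {z : ℂ} (hz : z ∈ RHP) :
    1 + c * z ∈ RHP := by
  have hz' : 0 < z.re := hz
  show 0 < (1 + c * z).re
  simp only [add_re, one_re, re_ofReal_mul]
  positivity

lemma inv_mem_RHP {z : ℂ} (hz : z ∈ RHP) : z⁻¹ ∈ RHP := by
  have hz' : 0 < z.re := hz
  show 0 < z⁻¹.re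
  rw [inv_re]
  exact div_pos hz' (normSq_pos.mpr fun h => by simp [h] at hz')

lemma div_one_add_mul_mem_RHP {c : ℝ} (hc : 0 ≤ c) {z : ℂ} (hz : z ∈ RHP) :
    z / (1 + c * z) ∈ RHP := by
  have hz0 := ne_zero_of_mem_RHP hz
  have hinv : (z⁻¹ + c)⁻¹ = z / (1 + c * z) := by field_simp
  have hsum : z⁻¹ + c ∈ RHP := by
    show 0 < (z⁻¹ + c).re
    simpa using add_pos_of_pos_of_nonneg (inv_mem_RHP hz) hc
  exact hinv ▸ inv_mem_RHP hsum

lemma one_le_norm_one_add {z : ℂ} (hz : z ∈ RHP) : 1 ≤ ‖1 + z‖ := by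
  have hz' : 0 < z.re := hz
  calc (1 : ℝ) ≤ (1 + z).re := by simp only [add_re, one_re]; linarith
    _ ≤ ‖1 + z‖ := re_le_norm _

lemma norm_cpow_le_exp_of_re_nonpos {w s : ℂ} (hw : 0 ≤ w.re) (hw1 : 1 ≤ ‖w‖)
    (hs : s.re ≤ 0) : ‖w ^ s‖ ≤ Real.exp (Real.pi / 2 * |s.im|) := by
  have harg : |arg w| ≤ Real.pi / 2 := abs_arg_le_pi_div_two_iff.mpr hw
  have hexp : -(arg w * s.im) ≤ Real.pi / 2 * |s.im| := by
    calc -(arg w * s.im) ≤ |arg w * s.im| := neg_le_abs _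
      _ = |arg w| * |s.im| := abs_mul _ _
      _ ≤ Real.pi / 2 * |s.im| := by gcongr
  calc ‖w ^ s‖ ≤ ‖w‖ ^ s.re / Real.exp (arg w * s.im) := norm_cpow_le w s
    _ ≤ 1 / Real.exp (arg w * s.im) := by
        gcongr; exact Real.rpow_le_one_of_one_le_of_nonpos hw1 hs
    _ ≤ Real.exp (Real.pi / 2 * |s.im|) := by
        rwa [one_div, ← Real.exp_neg, Real.exp_le_exp]

lemma mul_cpow_of_re_pos {a b : ℂ} (ha : 0 < a.re) (hb : 0 < b.re) (s : ℂ) :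
    (a * b) ^ s = a ^ s * b ^ s := by
  have ha0 := ne_zero_of_mem_RHP ha
  have hb0 := ne_zero_of_mem_RHP hb
  have harga := abs_lt.mp (abs_arg_lt_pi_div_two_iff.mpr (Or.inl ha))
  have hargb := abs_lt.mp (abs_arg_lt_pi_div_two_iff.mpr (Or.inl hb))
  have hlog : log (a * b) = log a + log b :=
    log_mul ha0 hb0 ⟨by linarith [harga.1, hargb.1], by linarith [harga.2, hargb.2]⟩
  rw [cpow_def_of_ne_zero (mul_ne_zero ha0 hb0), cpow_def_of_ne_zero ha0,
    cpow_def_of_ne_zero hb0, hlog, add_mul, exp_add]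

lemma continuous_cpow_one_add (s : ℂ) : Continuous fun z : ↥RHP => (1 + z.1) ^ s :=
  (continuous_const.add continuous_subtype_val).cpow continuous_const fun z =>
    Or.inl (mem_shift z)

lemma norm_one_add_cpow_le {β : ℂ} (hβ : 0 ≤ β.re) (z : ↥RHP) :
    ‖(1 + z.1) ^ (-(2 * β))‖ ≤ Real.exp (Real.pi / 2 * |(-(2 * β)).im|) :=
  norm_cpow_le_exp_of_re_nonpos (mem_shift z).le (one_le_norm_one_add z.2) (by simp; linarith)

noncomputable def lupWeight (β : ℂ) (hβ : 0 ≤ β.re) : ↥RHP →ᵇ ℂ :=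
  .ofNormedAddCommGroup (fun z => (1 + z.1) ^ (-(2 * β))) (continuous_cpow_one_add _)
    (Real.exp (Real.pi / 2 * |(-(2 * β)).im|)) (norm_one_add_cpow_le hβ)

noncomputable def divOneAdd : C(↥RHP, ↥RHP) where
  toFun z := ⟨z.1 / (1 + z.1), mem_div z⟩
  continuous_toFun := (continuous_subtype_val.div (continuous_const.add continuous_subtype_val)
    fun z => ne_zero_of_mem_RHP (mem_shift z)).subtype_mk _

noncomputable def lupBCF (β : ℂ) (hβ : 0 ≤ β.re) : (↥RHP →ᵇ ℂ) →L[ℂ] (↥RHP →ᵇ ℂ) :=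
  ContinuousLinearMap.mul ℂ _ (lupWeight β hβ) ∘L compContinuousCLM ℂ ℂ divOneAdd

lemma lupBCF_mem_Hinf (β : ℂ) (hβ : 0 ≤ β.re) {f : ↥RHP →ᵇ ℂ} (hf : f ∈ Hinf) :
    lupBCF β hβ f ∈ Hinf := by
  have hf' : DifferentiableOn ℂ (extFun f) RHP := hf
  have hweight : DifferentiableOn ℂ (fun z : ℂ => (1 + z) ^ (-(2 * β))) RHP := fun z hz =>
    ((differentiableAt_const _).add differentiableAt_id |>.cpow_const
      (Or.inl (mem_shift ⟨z, hz⟩))).differentiableWithinAt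
  have hdiv : DifferentiableOn ℂ (fun z : ℂ => z / (1 + z)) RHP := fun z hz =>
    (differentiableAt_id.div ((differentiableAt_const _).add differentiableAt_id)
      (ne_zero_of_mem_RHP (mem_shift ⟨z, hz⟩))).differentiableWithinAt
  refine (hweight.mul (hf'.comp hdiv fun z hz => mem_div ⟨z, hz⟩)).congr fun z hz => ?_
  rw [extFun_of_mem _ hz, Pi.mul_apply, Function.comp_apply, extFun_of_mem _ (mem_div ⟨z, hz⟩)]
  rfl

noncomputable def lup (β : ℂ) (hβ : 0 ≤ β.re) : ↥Hinf →L[ℂ] ↥Hinf :=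
  (lupBCF β hβ ∘L Hinf.subtypeL).codRestrict Hinf fun f => lupBCF_mem_Hinf β hβ f.2

lemma isLup_lup (β : ℂ) (hβ : 0 ≤ β.re) : IsLup β (lup β hβ) := fun _ _ => rfl

noncomputable def constOne : ↥Hinf :=
  ⟨1, (differentiableOn_const 1).congr fun _ hz => extFun_of_mem 1 hz⟩

lemma norm_constOne : ‖constOne‖ = 1 := norm_one (α := ↥RHP →ᵇ ℂ)

namespace IsLup

variable {β : ℂ} {T : ↥Hinf →L[ℂ] ↥Hinf}

lemma opNorm_le (hβ : 0 ≤ β.re) (hT : IsLup β T) :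
    ‖T‖ ≤ Real.exp (Real.pi / 2 * |(-(2 * β)).im|) := by
  refine T.opNorm_le_bound (Real.exp_pos _).le fun f => ?_
  refine (BoundedContinuousFunction.norm_le (by positivity)).mpr fun z => ?_
  show ‖(T f).1 z‖ ≤ _
  rw [hT f z, norm_mul]
  exact mul_le_mul (norm_one_add_cpow_le hβ z) (f.1.norm_coe_le_norm _) (norm_nonneg _)
    (Real.exp_pos _).le

lemma pow_apply (hT : IsLup β T) (n : ℕ) (f : ↥Hinf) (z : ↥RHP) :
    ((T ^ n) f).1 z = (1 + n * z.1) ^ (-(2 * β)) *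
      f.1 ⟨z.1 / (1 + n * z.1), by simpa using div_one_add_mul_mem_RHP n.cast_nonneg z.2⟩ := by
  induction n generalizing f with
  | zero => simp
  | succ n ih =>
    have hn : (1 : ℂ) + n * z.1 ∈ RHP := by simpa using one_add_mul_mem_RHP n.cast_nonneg z.2
    have hn0 := ne_zero_of_mem_RHP hn
    set u : ↥RHP :=
      ⟨z.1 / (1 + n * z.1), by simpa using div_one_add_mul_mem_RHP n.cast_nonneg z.2⟩
    have hweight : (1 + n * z.1) * (1 + u.1) = 1 + (n + 1 : ℕ) * z.1 := by
      simp only [u]; push_cast; field_simp; ring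
    have hpoint : u.1 / (1 + u.1) = z.1 / (1 + (n + 1 : ℕ) * z.1) := by
      rw [← hweight, ← div_div]
    rw [pow_succ, mul_apply_eq_comp, ih, hT f u, ← mul_assoc,
      ← mul_cpow_of_re_pos hn (mem_shift u), hweight]
    congr 2
    exact Subtype.ext hpoint

lemma norm_pow_constOne_apply (hT : IsLup β T) (n : ℕ) {x : ℝ} (hx : 0 < x) :
    ‖((T ^ n) constOne).1 ⟨x, hx⟩‖ = (1 + n * x) ^ (-(2 * β)).re := by
  rw [hT.pow_apply, show constOne.1 _ = 1 from rfl, mul_one,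
    show (1 : ℂ) + n * x = ((1 + n * x : ℝ) : ℂ) by push_cast; rfl,
    norm_cpow_eq_rpow_re_of_pos (by positivity)]

lemma one_le_opNorm_pow (hT : IsLup β T) (n : ℕ) : 1 ≤ ‖T ^ n‖ := by
  have hbound : ∀ x : ℝ, 0 < x → (1 + n * x) ^ (-(2 * β)).re ≤ ‖T ^ n‖ := fun x hx =>
    calc (1 + n * x) ^ (-(2 * β)).re = ‖((T ^ n) constOne).1 ⟨x, hx⟩‖ :=
          (hT.norm_pow_constOne_apply n hx).symm
      _ ≤ ‖(T ^ n) constOne‖ := BoundedContinuousFunction.norm_coe_le_norm _ _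
      _ ≤ ‖T ^ n‖ * ‖constOne‖ := (T ^ n).le_opNorm constOne
      _ = ‖T ^ n‖ := by rw [norm_constOne, mul_one]
  have hlim : Tendsto (fun x : ℝ => (1 + n * x) ^ (-(2 * β)).re) (𝓝[>] 0) (𝓝 1) := by
    have hcont : ContinuousAt (fun x : ℝ => (1 + n * x) ^ (-(2 * β)).re) 0 :=
      (continuous_const.add (continuous_const.mul continuous_id)).continuousAt.rpow_const
        (Or.inl (by simp))
    simpa using hcont.tendsto.mono_left nhdsWithin_le_nhds
  exact le_of_tendsto hlim (eventually_nhdsWithin_of_forall hbound)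

end IsLup

/-- For `Re β ≥ 0` the operator `(L↑_β f)(z) = (1+z)^{-2β} f(z/(1+z))` is a
bounded linear operator on `H^∞(Π)`; moreover, for real `β ≥ 0`, `‖(L↑_β)ⁿ‖ = 1` for all
`n ≥ 1`. -/
theorem Lup_bounded_and_power_norm_one :
    (∀ β : ℂ, 0 ≤ β.re → ∃ T : ↥Hinf →L[ℂ] ↥Hinf, IsLup β T) ∧
    (∀ β : ℝ, 0 ≤ β → ∀ T : ↥Hinf →L[ℂ] ↥Hinf, IsLup (β : ℂ) T →
      ∀ n : ℕ, 1 ≤ n → ‖T ^ n‖ = 1) := by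
  refine ⟨fun β hβ => ⟨lup β hβ, isLup_lup β hβ⟩, fun β hβ T hT n hn => ?_⟩
  have hT1 : ‖T‖ ≤ 1 := by simpa using hT.opNorm_le (by simpa using hβ)
  refine le_antisymm ?_ (hT.one_le_opNorm_pow n)
  calc ‖T ^ n‖ ≤ ‖T‖ ^ n := norm_pow_le' T hn
    _ ≤ 1 := pow_le_one₀ (norm_nonneg T) hT1
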